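/- arXiv:2509.04258 — 3 statements merged into one kernel-verified Lean document; each statement's English description precedes it below -/
import Mathlib

section
/- Let α(γ) = arcsin(((μ² − 1)(R − s)² + d(γ)²)/(2μ d(γ)(R − s))) and δ(γ) = arctan2(s sin γ, r − s cos γ), where d(γ) = √(r² − 2rs cos γ + s²). Then the derivative with respect to γ of φ(γ) = α(γ) − δ(γ) vanishes at γ* = arccos((R² + r² − μ²(R − s)²)/(2rR)), provided the arguments of arccos and arcsin lie in the open interval (−1, 1) and d(γ*) > 0. -/
/-!
Put the evader at E = (r, 0), the pursuer at P = s(cos γ, -sin γ), and let Q = R(cos γ, -sin γ)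
be the end of the pursuer's ray, so that d = |EP|, |PQ| = R - s and δ = arg (E - P). The angle γ*
is exactly the one for which |EQ| = μ(R - s), and then the arcsin argument is, by the law of
cosines, the cosine of the angle of the triangle EPQ at E. Its sine is twice the area of EPQ over
|EP| |EQ|, i.e. r (R - s) sin γ* / (μ (R - s) d), and with it the chain rule gives
α'(γ*) = s (r cos γ* - s) / d² = δ'(γ*).
-/

open Real

theorem HasDerivAt.arg_real {f : ℝ → ℂ} {f' : ℂ} {t : ℝ} (hf : HasDerivAt f f' t)
    (ht : f t ∈ Complex.slitPlane) : HasDerivAt (fun t => (f t).arg) (f' / f t).im t := by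
  simpa only [Function.comp_def, Complex.imCLM_apply, Complex.log_im] using
    Complex.imCLM.hasFDerivAt.comp_hasDerivAt t (hf.clog_real ht)

theorem hasDerivAt_arg_sub_cos_add_sin {r s γ : ℝ}
    (h : ((r - s * cos γ : ℝ) + (s * sin γ : ℝ) * Complex.I) ∈ Complex.slitPlane) :
    HasDerivAt (fun γ => Complex.arg ((r - s * cos γ : ℝ) + (s * sin γ : ℝ) * Complex.I))
      (s * (r * cos γ - s) / (r ^ 2 - 2 * r * s * cos γ + s ^ 2)) γ := by
  have hx : HasDerivAt (fun γ => r - s * cos γ) (s * sin γ) γ := by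
    simpa using ((hasDerivAt_cos γ).const_mul s).const_sub r
  have hy : HasDerivAt (fun γ => s * sin γ) (s * cos γ) γ := (hasDerivAt_sin γ).const_mul s
  have hnorm : Complex.normSq ((r - s * cos γ : ℝ) + (s * sin γ : ℝ) * Complex.I) =
      r ^ 2 - 2 * r * s * cos γ + s ^ 2 := by
    rw [Complex.normSq_add_mul_I]
    linear_combination s ^ 2 * sin_sq_add_cos_sq γ
  refine (HasDerivAt.arg_real
    (hx.ofReal_comp.add (hy.ofReal_comp.mul_const Complex.I)) h).congr_deriv ?_
  rw [Pi.add_apply, Complex.div_im, hnorm]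
  simp only [Complex.add_re, Complex.add_im, Complex.mul_re, Complex.mul_im, Complex.ofReal_re,
    Complex.ofReal_im, Complex.I_re, Complex.I_im]
  linear_combination (-s ^ 2 / (r ^ 2 - 2 * r * s * cos γ + s ^ 2)) * sin_sq_add_cos_sq γ

theorem mem_slitPlane_sub_cos_add_sin {r s γ : ℝ} (hr : 0 < r) (hγ : sin γ ≠ 0) :
    ((r - s * cos γ : ℝ) + (s * sin γ : ℝ) * Complex.I) ∈ Complex.slitPlane := by
  simp only [Complex.mem_slitPlane_iff, Complex.add_re, Complex.add_im, Complex.mul_I_re,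
    Complex.mul_I_im, Complex.ofReal_re, Complex.ofReal_im, neg_zero, add_zero, zero_add]
  rcases eq_or_ne s 0 with rfl | hs
  · simpa using hr
  · exact Or.inr (mul_ne_zero hs hγ)

theorem hasDerivAt_sqrt_lawOfCosines {r s γ : ℝ} (h : 0 < r ^ 2 - 2 * r * s * cos γ + s ^ 2) :
    HasDerivAt (fun γ => √(r ^ 2 - 2 * r * s * cos γ + s ^ 2))
      (r * s * sin γ / √(r ^ 2 - 2 * r * s * cos γ + s ^ 2)) γ := by
  have hq : HasDerivAt (fun γ => r ^ 2 - 2 * r * s * cos γ + s ^ 2) (2 * r * s * sin γ) γ := by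
    simpa using (((hasDerivAt_cos γ).const_mul (2 * r * s)).const_sub (r ^ 2)).add_const (s ^ 2)
  refine (hq.sqrt h.ne').congr_deriv ?_
  ring

theorem HasDerivAt.add_sq_div_const_mul {d : ℝ → ℝ} {d' a b t : ℝ} (hd : HasDerivAt d d' t)
    (hdt : d t ≠ 0) (hb : b ≠ 0) :
    HasDerivAt (fun t => (a + d t ^ 2) / (b * d t)) (d' * (d t ^ 2 - a) / (b * d t ^ 2)) t := by
  refine (((hd.fun_pow 2).const_add a).div (hd.const_mul b) (mul_ne_zero hb hdt)).congr_deriv ?_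
  field_simp
  ring

theorem sqrt_one_sub_div_sq {x y z : ℝ} (hy : y ≠ 0) (h : y ^ 2 - x ^ 2 = z ^ 2) :
    √(1 - (x / y) ^ 2) = |z / y| := by
  rw [← sqrt_sq_eq_abs, div_pow, div_pow, one_sub_div (pow_ne_zero 2 hy), h]

/-- With E = (r, 0), P = s(c, σ), Q = R(c, σ), c² + σ² = 1, D = |EP| and ρ = |EQ|, this is four
times Lagrange's identity |EP|²|EQ|² - (EP • EQ)² = (EP × EQ)². -/
theorem lagrange_identity_triangle {r s R c ρ D : ℝ} (hρ : ρ ^ 2 = R ^ 2 + r ^ 2 - 2 * r * R * c)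
    (hD : D ^ 2 = r ^ 2 - 2 * r * s * c + s ^ 2) :
    (2 * ρ * D) ^ 2 - (D ^ 2 + ρ ^ 2 - (R - s) ^ 2) ^ 2 = (2 * r * (R - s)) ^ 2 * (1 - c ^ 2) := by
  rw [mul_pow, mul_pow, hρ, hD]
  ring

theorem arcsin_deriv_eq_arg_deriv_of_critical {μ R s r c σ D : ℝ} (hμ : 0 < μ) (hr : 0 < r)
    (hRs : 0 < R - s) (hσ : 0 < σ) (hD : 0 < D) (hσc : σ ^ 2 = 1 - c ^ 2)
    (hρ : (μ * (R - s)) ^ 2 = R ^ 2 + r ^ 2 - 2 * r * R * c)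
    (hD2 : D ^ 2 = r ^ 2 - 2 * r * s * c + s ^ 2) :
    1 / √(1 - (((μ ^ 2 - 1) * (R - s) ^ 2 + D ^ 2) / (2 * μ * (R - s) * D)) ^ 2) *
        (r * s * σ / D * (D ^ 2 - (μ ^ 2 - 1) * (R - s) ^ 2) / (2 * μ * (R - s) * D ^ 2)) =
      s * (r * c - s) / D ^ 2 := by
  have hsqrt : √(1 - (((μ ^ 2 - 1) * (R - s) ^ 2 + D ^ 2) / (2 * μ * (R - s) * D)) ^ 2) =
      r * σ / (μ * D) := by
    rw [sqrt_one_sub_div_sq (z := 2 * r * (R - s) * σ) (by positivity)]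
    · rw [abs_of_pos (by positivity)]
      field_simp
    · linear_combination lagrange_identity_triangle hρ hD2 - (2 * r * (R - s)) ^ 2 * hσc
  rw [hsqrt]
  field_simp
  linear_combination s * (hD2 - hρ)

theorem stmt_5_general (μ R s r : ℝ) (hμ : 0 < μ) (hR : 0 < R)
    (hsR : s < R) (hr : 0 < r)
    (d : ℝ → ℝ) (hd : d = fun γ => Real.sqrt (r ^ 2 - 2 * r * s * Real.cos γ + s ^ 2))
    (α : ℝ → ℝ)
    (hα : α = fun γ =>
      Real.arcsin (((μ ^ 2 - 1) * (R - s) ^ 2 + d γ ^ 2) / (2 * μ * d γ * (R - s))))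
    (δ : ℝ → ℝ)
    (hδ : δ = fun γ =>
      Complex.arg ((r - s * Real.cos γ : ℝ) + (s * Real.sin γ : ℝ) * Complex.I))
    (γstar : ℝ)
    (hγ : γstar = Real.arccos ((R ^ 2 + r ^ 2 - μ ^ 2 * (R - s) ^ 2) / (2 * r * R)))
    (hcos : (R ^ 2 + r ^ 2 - μ ^ 2 * (R - s) ^ 2) / (2 * r * R) ∈ Set.Ioo (-1 : ℝ) 1)
    (hsin : ((μ ^ 2 - 1) * (R - s) ^ 2 + d γstar ^ 2) / (2 * μ * d γstar * (R - s)) ∈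
      Set.Ioo (-1 : ℝ) 1)
    (hdpos : 0 < d γstar) :
    HasDerivAt (fun γ => α γ - δ γ) 0 γstar := by
  subst hα hδ
  have hRs : 0 < R - s := sub_pos.2 hsR
  generalize hc : (R ^ 2 + r ^ 2 - μ ^ 2 * (R - s) ^ 2) / (2 * r * R) = c at hγ hcos
  have hρ : (μ * (R - s)) ^ 2 = R ^ 2 + r ^ 2 - 2 * r * R * c := by
    rw [← hc]; field_simp; ring
  have hcosγ : cos γstar = c := hγ ▸ cos_arccos hcos.1.le hcos.2.le
  have hσ : 0 < sin γstar :=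
    hγ ▸ sin_pos_of_pos_of_lt_pi (arccos_pos.2 hcos.2) (arccos_lt_pi.2 hcos.1)
  have hq : 0 < r ^ 2 - 2 * r * s * cos γstar + s ^ 2 := by
    rw [hd] at hdpos; exact sqrt_pos.1 hdpos
  have hD2 : d γstar ^ 2 = r ^ 2 - 2 * r * s * c + s ^ 2 := by
    rw [hd, sq_sqrt hq.le, hcosγ]
  have hdd : HasDerivAt d (r * s * sin γstar / d γstar) γstar := by
    rw [hd]; exact hasDerivAt_sqrt_lawOfCosines hq
  have hu : ((μ ^ 2 - 1) * (R - s) ^ 2 + d γstar ^ 2) / (2 * μ * (R - s) * d γstar) ∈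
      Set.Ioo (-1 : ℝ) 1 := by
    simpa only [mul_right_comm _ (d γstar)] using hsin
  simp only [mul_right_comm _ (d _) (R - s)]
  refine (((hasDerivAt_arcsin hu.1.ne' hu.2.ne).comp γstar
    (hdd.add_sq_div_const_mul hdpos.ne' (by positivity))).sub
    (hasDerivAt_arg_sub_cos_add_sin (mem_slitPlane_sub_cos_add_sin hr hσ.ne'))).congr_deriv ?_
  rw [arcsin_deriv_eq_arg_deriv_of_critical hμ hr hRs hσ hdpos (hcosγ ▸ sin_sq γstar) hρ hD2,
    hcosγ, ← hD2, sub_self]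

/-- The derivative of φ(γ) = α(γ) − δ(γ) vanishes at
γ* = arccos((R² + r² − μ²(R − s)²)/(2rR)).  Here arctan2(y, x) is expressed
as the argument of the complex number x + y i. -/
theorem stmt_5 (μ R s r : ℝ) (hμ : 0 < μ) (hμ1 : μ ≤ 1) (hR : 0 < R)
    (hs : 0 ≤ s) (hsR : s < R) (hr : 0 < r)
    (d : ℝ → ℝ) (hd : d = fun γ => Real.sqrt (r ^ 2 - 2 * r * s * Real.cos γ + s ^ 2))
    (α : ℝ → ℝ)
    (hα : α = fun γ =>
      Real.arcsin (((μ ^ 2 - 1) * (R - s) ^ 2 + d γ ^ 2) / (2 * μ * d γ * (R - s))))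
    (δ : ℝ → ℝ)
    (hδ : δ = fun γ =>
      Complex.arg ((r - s * Real.cos γ : ℝ) + (s * Real.sin γ : ℝ) * Complex.I))
    (γstar : ℝ)
    (hγ : γstar = Real.arccos ((R ^ 2 + r ^ 2 - μ ^ 2 * (R - s) ^ 2) / (2 * r * R)))
    (hcos : (R ^ 2 + r ^ 2 - μ ^ 2 * (R - s) ^ 2) / (2 * r * R) ∈ Set.Ioo (-1 : ℝ) 1)
    (hsin : ((μ ^ 2 - 1) * (R - s) ^ 2 + d γstar ^ 2) / (2 * μ * d γstar * (R - s)) ∈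
      Set.Ioo (-1 : ℝ) 1)
    (hdpos : 0 < d γstar) :
    HasDerivAt (fun γ => α γ - δ γ) 0 γstar :=
  stmt_5_general μ R s r hμ hR hsR hr d hd α hα δ hδ γstar hγ hcos hsin hdpos
end

section
/- Substituting γ* = arccos((R² + r² − μ²(R − s)²)/(2rR)) into φ(γ) = α(γ) − δ(γ) yields φ(γ*) = arcsin((μ²(R − s)² + r² − R²)/(2μ r (R − s))). -/
/-!
Write `m = μ (R - s)`, `c = cos γ*` and `z = (r - s c) + i s sin γ*`, so that `δ(γ*) = arg z`,
`‖z‖ = d`, and the choice of `γ*` is the law of cosines `m² = R² + r² - 2 r R c`.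
With `A` the argument of the arcsin in `α`, `sin (α - δ) = (A re z - √(1 - A²) im z) / d`, and the
law of cosines turns `√(1 - A²)` into `r sin γ* / (μ d)` and this quotient into the claimed value.
Taking arcsin is legitimate because `α - δ ∈ [-π/2, π/2]`: above since `im z ≥ 0`, below since
`cos δ ≥ -sin α`, which after multiplying by `2 m d` reads
`(m + r - R)(m + r + R - 2s) + 2 s (1 - c)(m + r) ≥ 0`, true as `m² = (R - r)² + 2 r R (1 - c)`.
-/

open Real

theorem Real.arcsin_sub_arg {x : ℝ} {z : ℂ} (hx₁ : -1 ≤ x) (hx₂ : x ≤ 1) (hz : z ≠ 0)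
    (him : 0 ≤ z.im) (hre : -x * ‖z‖ ≤ z.re) :
    arcsin x - Complex.arg z = arcsin ((x * z.re - √(1 - x ^ 2) * z.im) / ‖z‖) := by
  have hz' : 0 < ‖z‖ := norm_pos_iff.mpr hz
  have harg : Complex.arg z ≤ arcsin x + π / 2 := by
    by_contra! h
    have := cos_lt_cos_of_nonneg_of_le_pi (by linarith [neg_pi_div_two_le_arcsin x])
      (Complex.arg_le_pi z) h
    rw [cos_add_pi_div_two, sin_arcsin hx₁ hx₂, Complex.cos_arg hz, div_lt_iff₀ hz'] at this
    linarith
  have hsin : sin (arcsin x - Complex.arg z) = (x * z.re - √(1 - x ^ 2) * z.im) / ‖z‖ := by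
    rw [sin_sub, sin_arcsin hx₁ hx₂, cos_arcsin, Complex.cos_arg hz, Complex.sin_arg]
    ring
  rw [← hsin, arcsin_sin] <;>
    linarith [arcsin_le_pi_div_two x, neg_pi_div_two_le_arcsin x, Complex.arg_nonneg_iff.mpr him]

theorem Complex.norm_mk_sub_mul_cos_mul_sin (r s γ : ℝ) :
    ‖(⟨r - s * Real.cos γ, s * Real.sin γ⟩ : ℂ)‖ = √(r ^ 2 - 2 * r * s * Real.cos γ + s ^ 2) := by
  rw [mk_eq_add_mul_I, norm_add_mul_I]
  congr 1
  linear_combination s ^ 2 * Real.sin_sq_add_cos_sq γ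

section LawOfCosines

variable {μ R s r γ d A : ℝ}

theorem neg_mul_le_sub_mul_cos (hμ : 0 < μ) (hs : 0 ≤ s) (hsR : s < R) (hr : 0 ≤ r)
    (hγ : 2 * r * R * cos γ = R ^ 2 + r ^ 2 - μ ^ 2 * (R - s) ^ 2)
    (hd : d ^ 2 = r ^ 2 - 2 * r * s * cos γ + s ^ 2)
    (hA : 2 * μ * d * (R - s) * A = (μ ^ 2 - 1) * (R - s) ^ 2 + d ^ 2) :
    -A * d ≤ r - s * cos γ := by
  have ht : 0 < R - s := by linarith
  have hc : 0 ≤ 1 - cos γ := by linarith [cos_le_one γ]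
  have hm : R - r ≤ μ * (R - s) := by
    refine (abs_le_of_sq_le_sq' ?_ (by positivity)).2
    nlinarith [mul_nonneg (mul_nonneg hr (hs.trans hsR.le)) hc]
  have hfactor : 2 * μ * (R - s) * (r - s * cos γ + A * d)
      = (μ * (R - s) + r - R) * (μ * (R - s) + r + R - 2 * s)
        + 2 * s * (1 - cos γ) * (μ * (R - s) + r) := by
    linear_combination hA + hd
  have hnonneg : 0 ≤ 2 * μ * (R - s) * (r - s * cos γ + A * d) := by
    rw [hfactor]
    refine add_nonneg (mul_nonneg ?_ ?_) (mul_nonneg (by positivity) ?_) <;> linarith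
  linarith [nonneg_of_mul_nonneg_right hnonneg (by positivity)]

theorem mul_sub_sqrt_one_sub_sq_mul_div_eq (hμ : 0 < μ) (hsR : s < R) (hr : 0 < r)
    (hS : 0 ≤ sin γ) (hγ : 2 * r * R * cos γ = R ^ 2 + r ^ 2 - μ ^ 2 * (R - s) ^ 2)
    (hd : d ^ 2 = r ^ 2 - 2 * r * s * cos γ + s ^ 2) (hd0 : 0 < d)
    (hA : 2 * μ * d * (R - s) * A = (μ ^ 2 - 1) * (R - s) ^ 2 + d ^ 2) :
    (A * (r - s * cos γ) - √(1 - A ^ 2) * (s * sin γ)) / d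
      = (μ ^ 2 * (R - s) ^ 2 + r ^ 2 - R ^ 2) / (2 * μ * r * (R - s)) := by
  have ht : 0 < R - s := by linarith
  have hsc := sin_sq_add_cos_sq γ
  have hcos : √(1 - A ^ 2) = r * sin γ / (μ * d) := by
    rw [← sqrt_sq (by positivity : 0 ≤ r * sin γ / (μ * d))]
    congr 1
    have key : (2 * (R - s)) ^ 2 * ((μ * d) ^ 2 * (1 - A ^ 2))
        = (2 * (R - s)) ^ 2 * (r * sin γ) ^ 2 := by
      grind
    rw [div_pow, eq_div_iff (by positivity)]
    linear_combination mul_left_cancel₀ (by positivity) key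
  have key : r * (2 * μ * d * (R - s) * A * (r - s * cos γ) - 2 * (R - s) * r * s * sin γ ^ 2)
      = d ^ 2 * (μ ^ 2 * (R - s) ^ 2 + r ^ 2 - R ^ 2) := by
    grind
  rw [hcos]
  field_simp
  linear_combination key

end LawOfCosines

theorem stmt_6_general (μ R s r : ℝ) (hμ : 0 < μ)
    (hs : 0 ≤ s) (hsR : s < R) (hr : 0 < r)
    (d : ℝ → ℝ) (hd : d = fun γ => Real.sqrt (r ^ 2 - 2 * r * s * Real.cos γ + s ^ 2))
    (α : ℝ → ℝ)
    (hα : α = fun γ =>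
      Real.arcsin (((μ ^ 2 - 1) * (R - s) ^ 2 + d γ ^ 2) / (2 * μ * d γ * (R - s))))
    (δ : ℝ → ℝ)
    (hδ : δ = fun γ =>
      Complex.arg ((r - s * Real.cos γ : ℝ) + (s * Real.sin γ : ℝ) * Complex.I))
    (γstar : ℝ)
    (hγ : γstar = Real.arccos ((R ^ 2 + r ^ 2 - μ ^ 2 * (R - s) ^ 2) / (2 * r * R)))
    (hcos : (R ^ 2 + r ^ 2 - μ ^ 2 * (R - s) ^ 2) / (2 * r * R) ∈ Set.Icc (-1 : ℝ) 1)
    (hsin : ((μ ^ 2 - 1) * (R - s) ^ 2 + d γstar ^ 2) / (2 * μ * d γstar * (R - s)) ∈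
      Set.Icc (-1 : ℝ) 1)
    (hdpos : 0 < d γstar) :
    α γstar - δ γstar =
      Real.arcsin ((μ ^ 2 * (R - s) ^ 2 + r ^ 2 - R ^ 2) / (2 * μ * r * (R - s))) := by
  subst hα hδ
  beta_reduce
  rw [← Complex.mk_eq_add_mul_I]
  set A := ((μ ^ 2 - 1) * (R - s) ^ 2 + d γstar ^ 2) / (2 * μ * d γstar * (R - s))
  have hR : 0 < R := hs.trans_lt hsR
  have hcosγ : 2 * r * R * cos γstar = R ^ 2 + r ^ 2 - μ ^ 2 * (R - s) ^ 2 := by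
    rw [hγ, cos_arccos hcos.1 hcos.2]
    field_simp
  have hsinγ : 0 ≤ sin γstar :=
    hγ ▸ sin_nonneg_of_nonneg_of_le_pi (arccos_nonneg _) (arccos_le_pi _)
  have hd2 : d γstar ^ 2 = r ^ 2 - 2 * r * s * cos γstar + s ^ 2 := by
    subst hd
    exact sq_sqrt (sqrt_pos.mp hdpos).le
  have hdA : 2 * μ * d γstar * (R - s) * A = (μ ^ 2 - 1) * (R - s) ^ 2 + d γstar ^ 2 :=
    mul_div_cancel₀ _ (by have := sub_pos.2 hsR; positivity)
  have hz : ‖(⟨r - s * cos γstar, s * sin γstar⟩ : ℂ)‖ = d γstar := by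
    rw [Complex.norm_mk_sub_mul_cos_mul_sin, hd]
  rw [arcsin_sub_arg hsin.1 hsin.2 (norm_pos_iff.mp (hz ▸ hdpos)) (mul_nonneg hs hsinγ)
    (hz ▸ neg_mul_le_sub_mul_cos hμ hs hsR hr.le hcosγ hd2 hdA), hz]
  exact congrArg arcsin (mul_sub_sqrt_one_sub_sq_mul_div_eq hμ hsR hr hsinγ hcosγ hd2 hdpos hdA)

/-- Substituting γ* = arccos((R² + r² − μ²(R−s)²)/(2rR)) into φ(γ) = α(γ) − δ(γ)
yields φ(γ*) = arcsin((μ²(R − s)² + r² − R²)/(2μ r (R − s))). -/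
theorem stmt_6 (μ R s r : ℝ) (hμ : 0 < μ) (hμ1 : μ ≤ 1) (hR : 0 < R)
    (hs : 0 ≤ s) (hsR : s < R) (hr : 0 < r)
    (d : ℝ → ℝ) (hd : d = fun γ => Real.sqrt (r ^ 2 - 2 * r * s * Real.cos γ + s ^ 2))
    (α : ℝ → ℝ)
    (hα : α = fun γ =>
      Real.arcsin (((μ ^ 2 - 1) * (R - s) ^ 2 + d γ ^ 2) / (2 * μ * d γ * (R - s))))
    (δ : ℝ → ℝ)
    (hδ : δ = fun γ =>
      Complex.arg ((r - s * Real.cos γ : ℝ) + (s * Real.sin γ : ℝ) * Complex.I))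
    (γstar : ℝ)
    (hγ : γstar = Real.arccos ((R ^ 2 + r ^ 2 - μ ^ 2 * (R - s) ^ 2) / (2 * r * R)))
    (hcos : (R ^ 2 + r ^ 2 - μ ^ 2 * (R - s) ^ 2) / (2 * r * R) ∈ Set.Icc (-1 : ℝ) 1)
    (hsin : ((μ ^ 2 - 1) * (R - s) ^ 2 + d γstar ^ 2) / (2 * μ * d γstar * (R - s)) ∈
      Set.Icc (-1 : ℝ) 1)
    (hdpos : 0 < d γstar) :
    α γstar - δ γstar =
      Real.arcsin ((μ ^ 2 * (R - s) ^ 2 + r ^ 2 - R ^ 2) / (2 * μ * r * (R - s))) :=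
  stmt_6_general μ R s r hμ hs hsR hr d hd α hα δ hδ γstar hγ hcos hsin hdpos
end

section
/- Let μ ∈ (0, 1], R > 0. If an evader at point E outside the shifted disk D_ψ = {x : |x − P + μR u(ψ)| ≤ R} (where u(ψ) is the unit vector of its heading ψ and P is the pursuer's position) travels with heading ψ at speed v_E, and a pursuer at P travels at speed v_P = v_E/μ along any path of total length at most R, then the pursuer never coincides with the evader: for all t ∈ [0, μR/v_E], |E + v_E t u(ψ) − x_P(t)| > 0 for any pursuer trajectory x_P with x_P(0) = P and Lipschitz constant v_P, total arc length ≤ R. (Engagement-zone safety.) -/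
open Real

/-- Engagement-zone safety: if the evader is strictly outside the pursuer's
engagement zone (the reachability disk of radius R shifted a distance μR
opposite the evader's heading) and holds its heading, then no pursuer
trajectory of speed v_P = v_E/μ and total arc length at most R can ever
coincide with the evader during t ∈ [0, μR/v_E].  The plane is modelled by ℂ
and the unit heading vector by exp(ψ i). -/
theorem stmt_17 (μ R vE ψ : ℝ) (hμ : 0 < μ) (hμ1 : μ ≤ 1) (hR : 0 < R)
    (hv : 0 < vE) (E P : ℂ)
    (hout : R < ‖E - P + (μ * R : ℝ) * Complex.exp (ψ * Complex.I)‖)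
    (xP : ℝ → ℂ) (hx0 : xP 0 = P)
    (hLip : ∀ a b : ℝ, dist (xP a) (xP b) ≤ (vE / μ) * |a - b|)
    (harc : eVariationOn xP (Set.Icc 0 (μ * R / vE)) ≤ ENNReal.ofReal R) :
    ∀ t ∈ Set.Icc (0 : ℝ) (μ * R / vE),
      0 < ‖E + (vE * t : ℝ) * Complex.exp (ψ * Complex.I) - xP t‖ := by
  intro t ht
  obtain ⟨ht0, ht1⟩ := ht
  set u : ℂ := Complex.exp (ψ * Complex.I) with hu_def
  have hu : ‖u‖ = 1 := by
    simpa [hu_def] using Complex.abs_exp_ofReal_mul_I ψ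
  by_contra h
  push_neg at h
  have hzero : ‖E + (vE * t : ℝ) * u - xP t‖ = 0 := le_antisymm h (norm_nonneg _)
  rw [norm_eq_zero, sub_eq_zero] at hzero
  have hvt : vE * t ≤ μ * R := by
    have := (le_div_iff₀ hv).mp ht1
    nlinarith
  have h1 : ‖xP t - P‖ ≤ vE / μ * t := by
    have := hLip t 0
    rw [hx0] at *
    simpa [dist_eq_norm, abs_of_nonneg ht0] using this
  have h2 : ‖E - P + ((μ * R : ℝ) : ℂ) * u‖ ≤ ‖E - P + ((vE * t : ℝ) : ℂ) * u‖
      + (μ * R - vE * t) := by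
    have heq : E - P + ((μ * R : ℝ) : ℂ) * u
        = (E - P + ((vE * t : ℝ) : ℂ) * u) + ((μ * R - vE * t : ℝ) : ℂ) * u := by
      push_cast; ring
    rw [heq]
    calc ‖(E - P + ((vE * t : ℝ) : ℂ) * u) + ((μ * R - vE * t : ℝ) : ℂ) * u‖
        ≤ ‖E - P + ((vE * t : ℝ) : ℂ) * u‖ + ‖((μ * R - vE * t : ℝ) : ℂ) * u‖ :=
          norm_add_le _ _
      _ = ‖E - P + ((vE * t : ℝ) : ℂ) * u‖ + (μ * R - vE * t) := by
          rw [norm_mul, hu, Complex.norm_real, Real.norm_eq_abs, abs_of_nonneg (by linarith)]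
          ring
  have h3 : E - P + ((vE * t : ℝ) : ℂ) * u = xP t - P := by
    rw [← hzero]; ring
  rw [h3] at h2
  have hfin : vE / μ * t + (μ * R - vE * t) ≤ R := by
    have : vE * t * (1 - μ) ≤ μ * R * (1 - μ) := by nlinarith
    have hμ' : μ ≠ 0 := ne_of_gt hμ
    rw [div_mul_eq_mul_div, div_add' _ _ _ hμ', div_le_iff₀ hμ]
    nlinarith
  linarith
end
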